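/- arXiv:1212.0249 — 6 statements merged into one kernel-verified Lean document; each statement's English description precedes it below -/
import Mathlib

section
/- Theorem 4.1 (g-monotonicity of the Lax–Friedrichs-like operator): Let γ > 0 and let F : ℝ × ℝ → ℝ be such that for every x, p ↦ F(p,x) is differentiable with −γ ≤ ∂F/∂p(p,x) ≤ −1/γ for all (p,x). Let β₁, β₂, β₃ ≥ 0 with β₁ + β₂ + β₃ = 1 and let α > max{β₁, β₃}·γ. Then the numerical operator F̂_β(p₁,p₂,p₃,x) := F(β₁p₁ + β₂p₂ + β₃p₃, x) + α(p₁ − 2p₂ + p₃) is g-monotone; in fact, for each fixed values of the remaining arguments, F̂_β is strictly increasing in p₁, strictly increasing in p₃, and strictly decreasing in p₂. -/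
/-! In each argument `pᵢ` the operator has the form `t ↦ F(βᵢ t + b, x) + c t + d` with
`c = α` or `c = -2α`, whose derivative `βᵢ ∂F/∂p + c` has a fixed sign: for `p₁, p₃` because
the moment `α` beats `βᵢ γ ≥ -βᵢ ∂F/∂p`, for `p₂` because `∂F/∂p < 0`. -/

/-- The Lax–Friedrichs-like numerical operator
`F̂_β(p₁,p₂,p₃,x) := F(β₁p₁ + β₂p₂ + β₃p₃, x) + α(p₁ − 2p₂ + p₃)`;
the term `α(p₁ − 2p₂ + p₃)` is the numerical moment. -/
noncomputable def laxFriedrichsOp (F : ℝ → ℝ → ℝ) (β₁ β₂ β₃ α : ℝ)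
    (p₁ p₂ p₃ x : ℝ) : ℝ :=
  F (β₁ * p₁ + β₂ * p₂ + β₃ * p₃) x + α * (p₁ - 2 * p₂ + p₃)

section AffineSlice

variable {f : ℝ → ℝ} {a b c d : ℝ}

theorem hasDerivAt_comp_affine_add_affine {t : ℝ} (hf : DifferentiableAt ℝ f (a * t + b)) :
    HasDerivAt (fun t => f (a * t + b) + (c * t + d)) (a * deriv f (a * t + b) + c) t := by
  have hinner : HasDerivAt (fun t => a * t + b) a t := by
    simpa using ((hasDerivAt_id t).const_mul a).add_const b
  have hlin : HasDerivAt (fun t => c * t + d) c t := by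
    simpa using ((hasDerivAt_id t).const_mul c).add_const d
  exact ((hf.hasDerivAt.comp t hinner).add hlin).congr_deriv (by ring)

theorem strictMono_comp_affine_add_affine {m : ℝ} (hf : Differentiable ℝ f)
    (hf' : ∀ p, m ≤ deriv f p) (ha : 0 ≤ a) (hc : 0 < a * m + c) :
    StrictMono fun t => f (a * t + b) + (c * t + d) := by
  refine strictMono_of_deriv_pos fun t => ?_
  rw [(hasDerivAt_comp_affine_add_affine (hf _)).deriv]
  nlinarith [mul_le_mul_of_nonneg_left (hf' (a * t + b)) ha]

theorem strictAnti_comp_affine_add_affine {M : ℝ} (hf : Differentiable ℝ f)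
    (hf' : ∀ p, deriv f p ≤ M) (ha : 0 ≤ a) (hc : a * M + c < 0) :
    StrictAnti fun t => f (a * t + b) + (c * t + d) := by
  refine strictAnti_of_deriv_neg fun t => ?_
  rw [(hasDerivAt_comp_affine_add_affine (hf _)).deriv]
  nlinarith [mul_le_mul_of_nonneg_left (hf' (a * t + b)) ha]

end AffineSlice

theorem laxFriedrichsOp_gmonotone_general (γ : ℝ) (hγ : 0 < γ) (F : ℝ → ℝ → ℝ)
    (hFdiff : ∀ x : ℝ, Differentiable ℝ fun p => F p x)
    (hFderiv : ∀ p x : ℝ, deriv (fun q => F q x) p ∈ Set.Icc (-γ) (-(1 / γ)))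
    (β₁ β₂ β₃ : ℝ) (hβ₁ : 0 ≤ β₁) (hβ₂ : 0 ≤ β₂) (hβ₃ : 0 ≤ β₃)
    (α : ℝ) (hα : max β₁ β₃ * γ < α) :
    (∀ p₂ p₃ x : ℝ, StrictMono fun p₁ => laxFriedrichsOp F β₁ β₂ β₃ α p₁ p₂ p₃ x) ∧
    (∀ p₁ p₂ x : ℝ, StrictMono fun p₃ => laxFriedrichsOp F β₁ β₂ β₃ α p₁ p₂ p₃ x) ∧
    (∀ p₁ p₃ x : ℝ, StrictAnti fun p₂ => laxFriedrichsOp F β₁ β₂ β₃ α p₁ p₂ p₃ x) := by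
  have hβγ₁ : β₁ * γ < α := (mul_le_mul_of_nonneg_right (le_max_left _ _) hγ.le).trans_lt hα
  have hβγ₃ : β₃ * γ < α := (mul_le_mul_of_nonneg_right (le_max_right _ _) hγ.le).trans_lt hα
  have hα₀ : 0 < α := (by positivity : 0 ≤ β₁ * γ).trans_lt hβγ₁
  have hβγ₂ : 0 ≤ β₂ * (1 / γ) := by positivity
  refine ⟨fun p₂ p₃ x => ?_, fun p₁ p₂ x => ?_, fun p₁ p₃ x => ?_⟩
  · convert strictMono_comp_affine_add_affine (b := β₂ * p₂ + β₃ * p₃)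
      (c := α) (d := α * (p₃ - 2 * p₂)) (hFdiff x) (fun p => (hFderiv p x).1) hβ₁
      (by linarith) using 2 with p₁
    simp only [laxFriedrichsOp]
    ring_nf
  · convert strictMono_comp_affine_add_affine (b := β₁ * p₁ + β₂ * p₂)
      (c := α) (d := α * (p₁ - 2 * p₂)) (hFdiff x) (fun p => (hFderiv p x).1) hβ₃
      (by linarith) using 2 with p₃
    simp only [laxFriedrichsOp]
    ring_nf
  · convert strictAnti_comp_affine_add_affine (b := β₁ * p₁ + β₃ * p₃)
      (c := -2 * α) (d := α * (p₁ + p₃)) (hFdiff x) (fun p => (hFderiv p x).2) hβ₂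
      (by linarith) using 2 with p₂
    simp only [laxFriedrichsOp]
    ring_nf

/-- Theorem 4.1 (g-monotonicity of the Lax–Friedrichs-like operator): if
`p ↦ F(p,x)` is differentiable with `−γ ≤ ∂F/∂p ≤ −1/γ` everywhere, `β₁,β₂,β₃ ≥ 0` with
`β₁+β₂+β₃ = 1`, and `α > max{β₁,β₃}·γ`, then `F̂_β` is g-monotone; in fact it is strictly
increasing in `p₁`, strictly increasing in `p₃`, and strictly decreasing in `p₂`. -/
theorem laxFriedrichsOp_gmonotone (γ : ℝ) (hγ : 0 < γ) (F : ℝ → ℝ → ℝ)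
    (hFdiff : ∀ x : ℝ, Differentiable ℝ fun p => F p x)
    (hFderiv : ∀ p x : ℝ, deriv (fun q => F q x) p ∈ Set.Icc (-γ) (-(1 / γ)))
    (β₁ β₂ β₃ : ℝ) (hβ₁ : 0 ≤ β₁) (hβ₂ : 0 ≤ β₂) (hβ₃ : 0 ≤ β₃)
    (hsum : β₁ + β₂ + β₃ = 1)
    (α : ℝ) (hα : max β₁ β₃ * γ < α) :
    (∀ p₂ p₃ x : ℝ, StrictMono fun p₁ => laxFriedrichsOp F β₁ β₂ β₃ α p₁ p₂ p₃ x) ∧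
    (∀ p₁ p₂ x : ℝ, StrictMono fun p₃ => laxFriedrichsOp F β₁ β₂ β₃ α p₁ p₂ p₃ x) ∧
    (∀ p₁ p₃ x : ℝ, StrictAnti fun p₂ => laxFriedrichsOp F β₁ β₂ β₃ α p₁ p₂ p₃ x) :=
  laxFriedrichsOp_gmonotone_general γ hγ F hFdiff hFderiv β₁ β₂ β₃ hβ₁ hβ₂ hβ₃ α hα
end

section
/- Consistency and g-monotonicity of the Godunov-type operator F̂₅: Let F : ℝ × ℝ → ℝ with p ↦ F(p,x) continuous for each x. Define F̂₅(p₁,p₂,p₃,x) as follows: if p₂ ≥ max{p₁,p₃}, F̂₅ := min of F(·,x) over the interval [min{p₁,p₂,p₃}, max{p₁,p₂,p₃}]; if p₂ ≤ min{p₁,p₃}, F̂₅ := max of F(·,x) over [min{p₁,p₂,p₃}, max{p₁,p₂,p₃}]; if p₁ < p₂ < p₃, F̂₅ := max of F(·,x) over [p₂,p₃]; if p₃ < p₂ < p₁, F̂₅ := max of F(·,x) over [p₂,p₁]. Then (i) F̂₅(p,p,p,x) = F(p,x) for all p, x (consistency), and (ii) F̂₅ is g-monotone: for each fixed remaining arguments,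 F̂₅ is nondecreasing in p₁, nondecreasing in p₃, and nonincreasing in p₂. -/
/-!
Writing `lo = min p₁ p₃` and `hi = max p₁ p₃`, all four branches of `F̂₅` collapse to two:
the minimum of `F(·,x)` over `[lo, p₂]` when `hi ≤ p₂`, and its maximum over `[p₂, hi]`
otherwise. Raising `lo` or `hi`, or lowering `p₂`, shrinks the interval of a minimum or
enlarges the interval of a maximum; when such a move switches from the first branch to the
second, both values are compared with `F` at a point common to the two intervals.
-/

/-- The Godunov-type numerical operator `F̂₅` (formula (4.9)–(4.10)):
if `p₂ ≥ max{p₁,p₃}`, the minimum of `F(·,x)` over `I(p₁,p₂,p₃)`;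
if `p₂ ≤ min{p₁,p₃}`, the maximum of `F(·,x)` over `I(p₁,p₂,p₃)`;
if `p₁ < p₂ < p₃`, the maximum of `F(·,x)` over `[p₂,p₃]`;
if `p₃ < p₂ < p₁`, the maximum of `F(·,x)` over `[p₂,p₁]`.
Here `I(p₁,p₂,p₃) = [min{p₁,p₂,p₃}, max{p₁,p₂,p₃}]`. -/
noncomputable def godunovOp5 (F : ℝ → ℝ → ℝ) (p₁ p₂ p₃ x : ℝ) : ℝ :=
  if max p₁ p₃ ≤ p₂ then
    sInf ((fun p => F p x) '' Set.Icc (min p₁ (min p₂ p₃)) (max p₁ (max p₂ p₃)))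
  else if p₂ ≤ min p₁ p₃ then
    sSup ((fun p => F p x) '' Set.Icc (min p₁ (min p₂ p₃)) (max p₁ (max p₂ p₃)))
  else if p₁ < p₂ ∧ p₂ < p₃ then
    sSup ((fun p => F p x) '' Set.Icc p₂ p₃)
  else
    sSup ((fun p => F p x) '' Set.Icc p₂ p₁)

open Set

section Envelope

variable {α β : Type*} [LinearOrder α] [TopologicalSpace α] [CompactIccSpace α]
  [ConditionallyCompleteLinearOrder β] [TopologicalSpace β] [OrderTopology β]
  {f : α → β}

theorem Continuous.sInf_image_Icc_le (hf : Continuous f) {a b p : α} (hp : p ∈ Icc a b) :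
    sInf (f '' Icc a b) ≤ f p :=
  csInf_le (isCompact_Icc.image hf).bddBelow (mem_image_of_mem f hp)

theorem Continuous.le_sSup_image_Icc (hf : Continuous f) {a b p : α} (hp : p ∈ Icc a b) :
    f p ≤ sSup (f '' Icc a b) :=
  le_csSup (isCompact_Icc.image hf).bddAbove (mem_image_of_mem f hp)

theorem Continuous.sInf_image_Icc_anti (hf : Continuous f) {a b c d : α}
    (hca : c ≤ a) (hbd : b ≤ d) (hab : a ≤ b) :
    sInf (f '' Icc c d) ≤ sInf (f '' Icc a b) :=
  csInf_le_csInf (isCompact_Icc.image hf).bddBelow ((nonempty_Icc.mpr hab).image f)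
    (image_mono (Icc_subset_Icc hca hbd))

theorem Continuous.sSup_image_Icc_mono (hf : Continuous f) {a b c d : α}
    (hca : c ≤ a) (hbd : b ≤ d) (hab : a ≤ b) :
    sSup (f '' Icc a b) ≤ sSup (f '' Icc c d) :=
  csSup_le_csSup (isCompact_Icc.image hf).bddAbove ((nonempty_Icc.mpr hab).image f)
    (image_mono (Icc_subset_Icc hca hbd))

theorem Continuous.sInf_image_Icc_le_sSup_image_Icc (hf : Continuous f) {a b c d p : α}
    (hp : p ∈ Icc a b) (hp' : p ∈ Icc c d) :
    sInf (f '' Icc a b) ≤ sSup (f '' Icc c d) :=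
  (hf.sInf_image_Icc_le hp).trans (hf.le_sSup_image_Icc hp')

end Envelope

section GodunovCore

variable {α β : Type*} [LinearOrder α] [ConditionallyCompleteLinearOrder β]

noncomputable def godunovCore (f : α → β) (lo hi q : α) : β :=
  if hi ≤ q then sInf (f '' Icc lo q) else sSup (f '' Icc q hi)

theorem godunovCore_self (f : α → β) (p : α) : godunovCore f p p p = f p := by
  simp [godunovCore]

variable [TopologicalSpace α] [CompactIccSpace α] [TopologicalSpace β] [OrderTopology β]
  {f : α → β}

theorem godunovCore_mono (hf : Continuous f) {lo hi lo' hi' : α} (q : α)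
    (h : lo ≤ hi) (h' : lo' ≤ hi') (hlo : lo ≤ lo') (hhi : hi ≤ hi') :
    godunovCore f lo hi q ≤ godunovCore f lo' hi' q := by
  unfold godunovCore
  by_cases hq' : hi' ≤ q
  · rw [if_pos (hhi.trans hq'), if_pos hq']
    exact hf.sInf_image_Icc_anti hlo le_rfl (h'.trans hq')
  rw [if_neg hq']
  push Not at hq'
  by_cases hq : hi ≤ q
  · rw [if_pos hq]
    exact hf.sInf_image_Icc_le_sSup_image_Icc ⟨h.trans hq, le_rfl⟩ ⟨le_rfl, hq'.le⟩
  · rw [if_neg hq]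
    exact hf.sSup_image_Icc_mono le_rfl hhi (not_le.mp hq).le

theorem godunovCore_anti (hf : Continuous f) {lo hi : α} (h : lo ≤ hi) :
    Antitone (godunovCore f lo hi) := by
  intro q q' hqq'
  unfold godunovCore
  by_cases hq : hi ≤ q
  · rw [if_pos hq, if_pos (hq.trans hqq')]
    exact hf.sInf_image_Icc_anti le_rfl hqq' (h.trans hq)
  rw [if_neg hq]
  push Not at hq
  by_cases hq' : hi ≤ q'
  · rw [if_pos hq']
    exact hf.sInf_image_Icc_le_sSup_image_Icc ⟨h, hq'⟩ ⟨hq.le, le_rfl⟩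
  · rw [if_neg hq']
    exact hf.sSup_image_Icc_mono hqq' le_rfl (not_le.mp hq').le

end GodunovCore

theorem godunovOp5_eq_godunovCore (F : ℝ → ℝ → ℝ) (p₁ p₂ p₃ x : ℝ) :
    godunovOp5 F p₁ p₂ p₃ x = godunovCore (F · x) (min p₁ p₃) (max p₁ p₃) p₂ := by
  unfold godunovOp5 godunovCore
  by_cases hhi : max p₁ p₃ ≤ p₂
  · rw [if_pos hhi, if_pos hhi]
    congr 3 <;> grind
  · rw [if_neg hhi, if_neg hhi]
    split_ifs <;> congr 3 <;> grind

/-- Consistency and g-monotonicity of the Godunov-type operator `F̂₅`: if `p ↦ F(p,x)` is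
continuous for each `x`, then `F̂₅(p,p,p,x) = F(p,x)` and `F̂₅` is nondecreasing in `p₁`,
nondecreasing in `p₃`, and nonincreasing in `p₂`. -/
theorem godunovOp5_consistent_gmonotone (F : ℝ → ℝ → ℝ)
    (hF : ∀ x : ℝ, Continuous fun p => F p x) :
    (∀ p x : ℝ, godunovOp5 F p p p x = F p x) ∧
    (∀ p₂ p₃ x : ℝ, Monotone fun p₁ => godunovOp5 F p₁ p₂ p₃ x) ∧
    (∀ p₁ p₂ x : ℝ, Monotone fun p₃ => godunovOp5 F p₁ p₂ p₃ x) ∧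
    (∀ p₁ p₃ x : ℝ, Antitone fun p₂ => godunovOp5 F p₁ p₂ p₃ x) := by
  simp only [godunovOp5_eq_godunovCore]
  refine ⟨fun p x => ?_, fun p₂ p₃ x a b hab => ?_, fun p₁ p₂ x a b hab => ?_,
    fun p₁ p₃ x => godunovCore_anti (hF x) min_le_max⟩
  · rw [min_self, max_self, godunovCore_self]
  · exact godunovCore_mono (hF x) p₂ min_le_max min_le_max
      (min_le_min_right p₃ hab) (max_le_max_right p₃ hab)
  · exact godunovCore_mono (hF x) p₂ min_le_max min_le_max
      (min_le_min_left p₁ hab) (max_le_max_left p₁ hab)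
end

section
/- Proposition 4.1 (monotonicity of the fixed-point update map): Let γ > 0 and F : ℝ × ℝ → ℝ with p ↦ F(p,x) differentiable and −γ ≤ ∂F/∂p(p,x) ≤ −1/γ for all (p,x). Let β₁, β₂, β₃ ≥ 0, β₁ + β₂ + β₃ = 1, and α > max{β₁,β₃}·γ. Let ρ > 0 satisfy ρ·(2α + β₂γ) ≤ 1. Let n ≥ 1, x₁,…,x_n ∈ ℝ, and fix end data w₀, w_{n+1} ∈ ℝ. Define S : ℝⁿ → ℝⁿ by (S W)_j := W_j + ρ·F̂_β(W_{j−1}, W_j, W_{j+1}, x_j) for j = 1,…,n, where W₀ := w₀ and W_{n+1} := w_{n+1}. Then S is monotone: if W_j ≤ V_j for all j = 1,…,n, then (S W)_j ≤ (S V)_j for all j = 1,…,n. -/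
/-- Extension of a vector `W ∈ ℝⁿ` (indexed by grid points `1,…,n`) to all integer indices,
using the prescribed end data `w₀` at indices `≤ 0` and `w_{n+1}` at indices `≥ n+1`. -/
noncomputable def gridExt (n : ℕ) (w₀ wn1 : ℝ) (W : Fin n → ℝ) (i : ℤ) : ℝ :=
  if h : 1 ≤ i ∧ i ≤ (n : ℤ) then W ⟨(i - 1).toNat, by omega⟩
  else if i ≤ 0 then w₀ else wn1

/-- The fixed-point update map `S : ℝⁿ → ℝⁿ`,
`(S W)_j := W_j + ρ F̂_β(W_{j−1}, W_j, W_{j+1}, x_j)` for `j = 1,…,n`, where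
`W₀ := w₀` and `W_{n+1} := w_{n+1}`.  (Index `j : Fin n` corresponds to grid index `j+1`,
so the neighbors have integer indices `j` and `j+2`.) -/
noncomputable def updateMap (F : ℝ → ℝ → ℝ) (β₁ β₂ β₃ α ρ : ℝ) (n : ℕ)
    (w₀ wn1 : ℝ) (x : Fin n → ℝ) (W : Fin n → ℝ) : Fin n → ℝ :=
  fun j =>
    W j + ρ * laxFriedrichsOp F β₁ β₂ β₃ α
      (gridExt n w₀ wn1 W ((j : ℕ) : ℤ)) (W j) (gridExt n w₀ wn1 W (((j : ℕ) : ℤ) + 2)) (x j)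

/-! Since `∂F/∂p ≥ -γ`, the function `p ↦ F(p, x) + γ p` is nondecreasing. Splitting it off writes
`(S W)_j` as `ρ (F(s, x) + γ s) + ρ(α - β₁γ) W_{j-1} + (1 - ρ(2α + β₂γ)) W_j + ρ(α - β₃γ) W_{j+1}`
with `s = β₁ W_{j-1} + β₂ W_j + β₃ W_{j+1}`, and the hypotheses make every coefficient
nonnegative, so `(S W)_j` is nondecreasing in each of `W_{j-1}, W_j, W_{j+1}`. -/

theorem monotone_add_mul_of_neg_le_deriv {f : ℝ → ℝ} (hf : Differentiable ℝ f) {γ : ℝ}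
    (hderiv : ∀ p, -γ ≤ deriv f p) : Monotone fun p => f p + γ * p := by
  have hasDeriv (p : ℝ) : HasDerivAt (fun p => f p + γ * p) (deriv f p + γ * 1) p :=
    (hf p).hasDerivAt.add ((hasDerivAt_id p).const_mul γ)
  refine monotone_of_deriv_nonneg (fun p => (hasDeriv p).differentiableAt) fun p => ?_
  rw [(hasDeriv p).deriv]
  linarith [hderiv p]

theorem gridExt_mono (n : ℕ) (w₀ wn1 : ℝ) (i : ℤ) :
    Monotone fun W : Fin n → ℝ => gridExt n w₀ wn1 W i := by
  intro W V hWV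
  unfold gridExt
  split_ifs
  exacts [hWV _, le_rfl, le_rfl]

section LocalUpdate

variable {F : ℝ → ℝ → ℝ} {x γ β₁ β₂ β₃ α ρ : ℝ}

theorem add_mul_laxFriedrichsOp_eq (a b c : ℝ) :
    b + ρ * laxFriedrichsOp F β₁ β₂ β₃ α a b c x =
      ρ * (F (β₁ * a + β₂ * b + β₃ * c) x + γ * (β₁ * a + β₂ * b + β₃ * c)) +
        ρ * (α - β₁ * γ) * a + (1 - ρ * (2 * α + β₂ * γ)) * b + ρ * (α - β₃ * γ) * c := by
  unfold laxFriedrichsOp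
  ring

theorem add_mul_laxFriedrichsOp_le (hFdiff : Differentiable ℝ fun p => F p x)
    (hFderiv : ∀ p, -γ ≤ deriv (fun q => F q x) p)
    (hβ₁ : 0 ≤ β₁) (hβ₂ : 0 ≤ β₂) (hβ₃ : 0 ≤ β₃) (hα₁ : β₁ * γ ≤ α) (hα₃ : β₃ * γ ≤ α)
    (hρ : 0 ≤ ρ) (hρsmall : ρ * (2 * α + β₂ * γ) ≤ 1)
    {a b c a' b' c' : ℝ} (ha : a ≤ a') (hb : b ≤ b') (hc : c ≤ c') :
    b + ρ * laxFriedrichsOp F β₁ β₂ β₃ α a b c x ≤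
      b' + ρ * laxFriedrichsOp F β₁ β₂ β₃ α a' b' c' x := by
  have hG := monotone_add_mul_of_neg_le_deriv hFdiff hFderiv
  have hs : β₁ * a + β₂ * b + β₃ * c ≤ β₁ * a' + β₂ * b' + β₃ * c' := by gcongr
  rw [add_mul_laxFriedrichsOp_eq (γ := γ), add_mul_laxFriedrichsOp_eq (γ := γ)]
  have hcoef₁ : 0 ≤ ρ * (α - β₁ * γ) := mul_nonneg hρ (by linarith)
  have hcoef₂ : 0 ≤ 1 - ρ * (2 * α + β₂ * γ) := by linarith
  have hcoef₃ : 0 ≤ ρ * (α - β₃ * γ) := mul_nonneg hρ (by linarith)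
  gcongr ρ * ?_ + _ * ?_ + _ * ?_ + _ * ?_
  exact hG hs

end LocalUpdate

theorem updateMap_monotone_general (γ : ℝ) (hγ : 0 < γ) (F : ℝ → ℝ → ℝ)
    (hFdiff : ∀ x : ℝ, Differentiable ℝ fun p => F p x)
    (hFderiv : ∀ p x : ℝ, deriv (fun q => F q x) p ∈ Set.Icc (-γ) (-(1 / γ)))
    (β₁ β₂ β₃ : ℝ) (hβ₁ : 0 ≤ β₁) (hβ₂ : 0 ≤ β₂) (hβ₃ : 0 ≤ β₃)
    (α : ℝ) (hα : max β₁ β₃ * γ < α)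
    (ρ : ℝ) (hρ : 0 < ρ) (hρsmall : ρ * (2 * α + β₂ * γ) ≤ 1)
    (n : ℕ) (x : Fin n → ℝ) (w₀ wn1 : ℝ) :
    ∀ W V : Fin n → ℝ, (∀ j, W j ≤ V j) →
      ∀ j, updateMap F β₁ β₂ β₃ α ρ n w₀ wn1 x W j ≤ updateMap F β₁ β₂ β₃ α ρ n w₀ wn1 x V j := by
  intro W V hWV j
  have hα₁ : β₁ * γ ≤ α := (mul_le_mul_of_nonneg_right (le_max_left _ _) hγ.le).trans hα.le
  have hα₃ : β₃ * γ ≤ α := (mul_le_mul_of_nonneg_right (le_max_right _ _) hγ.le).trans hα.le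
  exact add_mul_laxFriedrichsOp_le (hFdiff (x j)) (fun p => (hFderiv p (x j)).1)
    hβ₁ hβ₂ hβ₃ hα₁ hα₃ hρ.le hρsmall
    (gridExt_mono n w₀ wn1 _ hWV) (hWV j) (gridExt_mono n w₀ wn1 _ hWV)

/-- Proposition 4.1 (monotonicity of the fixed-point update map): under the structure
condition `−γ ≤ ∂F/∂p ≤ −1/γ`, with `β₁,β₂,β₃ ≥ 0`, `β₁+β₂+β₃ = 1`,
`α > max{β₁,β₃}·γ`, and `0 < ρ` with `ρ(2α + β₂γ) ≤ 1`, the map `S` is monotone: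
`W ≤ V` componentwise implies `S W ≤ S V` componentwise. -/
theorem updateMap_monotone (γ : ℝ) (hγ : 0 < γ) (F : ℝ → ℝ → ℝ)
    (hFdiff : ∀ x : ℝ, Differentiable ℝ fun p => F p x)
    (hFderiv : ∀ p x : ℝ, deriv (fun q => F q x) p ∈ Set.Icc (-γ) (-(1 / γ)))
    (β₁ β₂ β₃ : ℝ) (hβ₁ : 0 ≤ β₁) (hβ₂ : 0 ≤ β₂) (hβ₃ : 0 ≤ β₃)
    (hsum : β₁ + β₂ + β₃ = 1)
    (α : ℝ) (hα : max β₁ β₃ * γ < α)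
    (ρ : ℝ) (hρ : 0 < ρ) (hρsmall : ρ * (2 * α + β₂ * γ) ≤ 1)
    (n : ℕ) (hn : 1 ≤ n) (x : Fin n → ℝ) (w₀ wn1 : ℝ) :
    ∀ W V : Fin n → ℝ, (∀ j, W j ≤ V j) →
      ∀ j, updateMap F β₁ β₂ β₃ α ρ n w₀ wn1 x W j ≤ updateMap F β₁ β₂ β₃ α ρ n w₀ wn1 x V j :=
  updateMap_monotone_general γ hγ F hFdiff hFderiv β₁ β₂ β₃ hβ₁ hβ₂ hβ₃ α hα ρ hρ hρsmall n x w₀ wn1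
end

section
/- Nonexpansiveness of monotone maps commuting with constants (Crandall–Tartar step used in Theorem 4.2): Let n ≥ 1 and let T : ℝⁿ → ℝⁿ satisfy (i) monotonicity: if U_j ≤ V_j for all j then (T U)_j ≤ (T V)_j for all j, and (ii) T commutes with addition of constants: T(U + λ·𝟙) = T(U) + λ·𝟙 for every U ∈ ℝⁿ and λ ∈ ℝ, where 𝟙 = (1,…,1). Then T is nonexpansive in the maximum norm: max_{1≤j≤n} |(T U)_j − (T V)_j| ≤ max_{1≤j≤n} |U_j − V_j| for all U, V ∈ ℝⁿ. -/
/-- Nonexpansiveness of monotone maps commuting with constants (Crandall–Tartar step used in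
Theorem 4.2): if `T : ℝⁿ → ℝⁿ` is monotone and commutes with the addition of constants, then
`T` is nonexpansive in the maximum norm: `‖T U − T V‖_∞ ≤ ‖U − V‖_∞`.
(Here `Fin n → ℝ` carries the sup norm.) -/
theorem monotone_commuting_map_nonexpansive (n : ℕ) (hn : 1 ≤ n)
    (T : (Fin n → ℝ) → Fin n → ℝ)
    (hmono : ∀ U V : Fin n → ℝ, (∀ j, U j ≤ V j) → ∀ j, T U j ≤ T V j)
    (hconst : ∀ (U : Fin n → ℝ) (lam : ℝ), T (fun j => U j + lam) = fun j => T U j + lam) :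
    ∀ U V : Fin n → ℝ, ‖T U - T V‖ ≤ ‖U - V‖ := by
  intro U V
  set c : ℝ := ‖U - V‖ with hc
  have hc0 : 0 ≤ c := norm_nonneg _
  have key : ∀ A B : Fin n → ℝ, ‖A - B‖ = c → ∀ j, T A j - T B j ≤ c := by
    intro A B hAB j
    have hle : ∀ j, A j ≤ B j + c := by
      intro j
      have h1 : |A j - B j| ≤ c := by
        rw [← hAB]
        simpa using norm_le_pi_norm (A - B) j
      linarith [abs_le.mp h1]
    have := hmono A (fun j => B j + c) hle j
    rw [hconst B c] at this
    simp only at this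
    linarith
  have h1 := key U V rfl
  have h2 := key V U ((norm_sub_rev V U).trans hc.symm)
  apply (pi_norm_le_iff_of_nonneg hc0).mpr
  intro j
  rw [Real.norm_eq_abs, abs_le]
  constructor
  · have := h2 j; simp only [Pi.sub_apply]; linarith
  · have := h1 j; simp only [Pi.sub_apply]; linarith
end

section
/- Contraction estimate (4.27) for the fixed-point update map: Let γ > 0 and F : ℝ × ℝ → ℝ with p ↦ F(p,x) differentiable and −γ ≤ ∂F/∂p(p,x) ≤ −1/γ for all (p,x). Let β₁, β₂, β₃ ≥ 0, β₁ + β₂ + β₃ = 1, α > max{β₁,β₃}·γ, and let ρ > 0 satisfy ρ·(2α + β₂γ) ≤ 1. Let n ≥ 1, x₁,…,x_n ∈ ℝ, end data w₀, w_{n+1} ∈ ℝ, and define S : ℝⁿ → ℝⁿ by (S W)_j := W_j + ρ·F̂_β(W_{j−1}, W_j, W_{j+1}, x_j) for j = 1,…,n, with W₀ := w₀, W_{n+1} := w_{n+1}. Then for all W, V ∈ ℝⁿ: ‖S W − S V‖_∞ ≤ (1 + ρ·[(β₁+β₃)γ − 1/γ])·‖W − V‖_∞. In particular, if moreover β₁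 + β₃ < 1/γ² and ρ ≥ (1/2)·[1/γ − (β₁+β₃)γ]^{−1}, then ‖S W − S V‖_∞ ≤ (1/2)·‖W − V‖_∞, i.e., S is a contraction with factor 1/2. -/
lemma mvt_aux (γ : ℝ) (F : ℝ → ℝ → ℝ)
    (hFdiff : ∀ x : ℝ, Differentiable ℝ fun p => F p x)
    (hFderiv : ∀ p x : ℝ, deriv (fun q => F q x) p ∈ Set.Icc (-γ) (-(1 / γ)))
    (x a b : ℝ) :
    ∃ c : ℝ, -γ ≤ c ∧ c ≤ -(1 / γ) ∧ F a x - F b x = c * (a - b) := by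
  rcases lt_trichotomy a b with h | h | h
  · obtain ⟨c, _, hc⟩ := exists_hasDerivAt_eq_slope (fun q => F q x)
      (fun p => deriv (fun q => F q x) p) h
      ((hFdiff x).continuous.continuousOn)
      (fun y _ => ((hFdiff x) y).hasDerivAt)
    refine ⟨deriv (fun q => F q x) c, (hFderiv c x).1, (hFderiv c x).2, ?_⟩
    rw [hc, div_mul_eq_mul_div, eq_div_iff (sub_ne_zero.mpr h.ne')]; ring
  · exact ⟨deriv (fun q => F q x) 0, (hFderiv 0 x).1, (hFderiv 0 x).2, by rw [h]; ring⟩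
  · obtain ⟨c, _, hc⟩ := exists_hasDerivAt_eq_slope (fun q => F q x)
      (fun p => deriv (fun q => F q x) p) h
      ((hFdiff x).continuous.continuousOn)
      (fun y _ => ((hFdiff x) y).hasDerivAt)
    refine ⟨deriv (fun q => F q x) c, (hFderiv c x).1, (hFderiv c x).2, ?_⟩
    rw [hc, div_mul_eq_mul_div, eq_div_iff (sub_ne_zero.mpr h.ne')]

lemma gridExt_sub_abs_le (n : ℕ) (w₀ wn1 : ℝ) (W V : Fin n → ℝ) (i : ℤ) :
    |gridExt n w₀ wn1 W i - gridExt n w₀ wn1 V i| ≤ ‖W - V‖ := by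
  unfold gridExt
  split_ifs with h h2
  · have := norm_le_pi_norm (W - V) ⟨(i - 1).toNat, by omega⟩
    simpa [Real.norm_eq_abs] using this
  · simpa using norm_nonneg (W - V)
  · simpa using norm_nonneg (W - V)

set_option maxHeartbeats 1000000 in
/-- Contraction estimate (4.27) for the fixed-point update map: under the structure
condition `−γ ≤ ∂F/∂p ≤ −1/γ`, with `β₁,β₂,β₃ ≥ 0`, `β₁+β₂+β₃ = 1`, `α > max{β₁,β₃}·γ`,
`0 < ρ`, and `ρ(2α + β₂γ) ≤ 1`, one has
`‖S W − S V‖_∞ ≤ (1 + ρ[(β₁+β₃)γ − 1/γ]) ‖W − V‖_∞`; in particular, if moreover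
`β₁ + β₃ < 1/γ²` and `ρ ≥ (1/2)[1/γ − (β₁+β₃)γ]⁻¹`, then
`‖S W − S V‖_∞ ≤ (1/2) ‖W − V‖_∞`.  (Here `Fin n → ℝ` carries the sup norm.) -/
theorem updateMap_contraction (γ : ℝ) (hγ : 0 < γ) (F : ℝ → ℝ → ℝ)
    (hFdiff : ∀ x : ℝ, Differentiable ℝ fun p => F p x)
    (hFderiv : ∀ p x : ℝ, deriv (fun q => F q x) p ∈ Set.Icc (-γ) (-(1 / γ)))
    (β₁ β₂ β₃ : ℝ) (hβ₁ : 0 ≤ β₁) (hβ₂ : 0 ≤ β₂) (hβ₃ : 0 ≤ β₃)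
    (hsum : β₁ + β₂ + β₃ = 1)
    (α : ℝ) (hα : max β₁ β₃ * γ < α)
    (ρ : ℝ) (hρ : 0 < ρ) (hρsmall : ρ * (2 * α + β₂ * γ) ≤ 1)
    (n : ℕ) (hn : 1 ≤ n) (x : Fin n → ℝ) (w₀ wn1 : ℝ) :
    (∀ W V : Fin n → ℝ,
      ‖updateMap F β₁ β₂ β₃ α ρ n w₀ wn1 x W - updateMap F β₁ β₂ β₃ α ρ n w₀ wn1 x V‖
        ≤ (1 + ρ * ((β₁ + β₃) * γ - 1 / γ)) * ‖W - V‖) ∧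
    (β₁ + β₃ < 1 / γ ^ 2 → (1 / 2) * (1 / γ - (β₁ + β₃) * γ)⁻¹ ≤ ρ →
      ∀ W V : Fin n → ℝ,
        ‖updateMap F β₁ β₂ β₃ α ρ n w₀ wn1 x W - updateMap F β₁ β₂ β₃ α ρ n w₀ wn1 x V‖
          ≤ (1 / 2) * ‖W - V‖) := by
  have hne := hFderiv 0 0
  have hγ1 : 1 ≤ γ := by
    have h2 : 1 / γ ≤ γ := by linarith [le_trans hne.1 hne.2]
    rw [div_le_iff₀ hγ] at h2
    nlinarith
  have hm1 : β₁ * γ < α := lt_of_le_of_lt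
    (mul_le_mul_of_nonneg_right (le_max_left β₁ β₃) hγ.le) hα
  have hm3 : β₃ * γ < α := lt_of_le_of_lt
    (mul_le_mul_of_nonneg_right (le_max_right β₁ β₃) hγ.le) hα
  have hK0 : 0 ≤ 1 + ρ * ((β₁ + β₃) * γ - 1 / γ) := by
    have h1γ : 1 / γ ≤ γ := by
      rw [div_le_iff₀ hγ]; nlinarith
    have hγle : γ ≤ 2 * α + β₂ * γ := by nlinarith
    have : ρ * (1 / γ) ≤ ρ * (2 * α + β₂ * γ) :=
      mul_le_mul_of_nonneg_left (h1γ.trans hγle) hρ.le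
    nlinarith [mul_nonneg (mul_nonneg hρ.le (add_nonneg hβ₁ hβ₃)) hγ.le]
  have main : ∀ W V : Fin n → ℝ,
      ‖updateMap F β₁ β₂ β₃ α ρ n w₀ wn1 x W - updateMap F β₁ β₂ β₃ α ρ n w₀ wn1 x V‖
        ≤ (1 + ρ * ((β₁ + β₃) * γ - 1 / γ)) * ‖W - V‖ := by
    intro W V
    rw [pi_norm_le_iff_of_nonneg (mul_nonneg hK0 (norm_nonneg _))]
    intro j
    set M := ‖W - V‖ with hM
    have hM0 : 0 ≤ M := norm_nonneg _
    set d₁ := gridExt n w₀ wn1 W ((j : ℕ) : ℤ) - gridExt n w₀ wn1 V ((j : ℕ) : ℤ) with hd₁def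
    set d₃ := gridExt n w₀ wn1 W (((j : ℕ) : ℤ) + 2) - gridExt n w₀ wn1 V (((j : ℕ) : ℤ) + 2)
      with hd₃def
    set d₂ := W j - V j with hd₂def
    have hd₁ : |d₁| ≤ M := gridExt_sub_abs_le n w₀ wn1 W V _
    have hd₃ : |d₃| ≤ M := gridExt_sub_abs_le n w₀ wn1 W V _
    have hd₂ : |d₂| ≤ M := by
      have := norm_le_pi_norm (W - V) j
      simpa [Real.norm_eq_abs] using this
    obtain ⟨c, hc1, hc2, hceq⟩ := mvt_aux γ F hFdiff hFderiv (x j)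
      (β₁ * gridExt n w₀ wn1 W ((j : ℕ) : ℤ) + β₂ * W j
        + β₃ * gridExt n w₀ wn1 W (((j : ℕ) : ℤ) + 2))
      (β₁ * gridExt n w₀ wn1 V ((j : ℕ) : ℤ) + β₂ * V j
        + β₃ * gridExt n w₀ wn1 V (((j : ℕ) : ℤ) + 2))
    have hcomp : (updateMap F β₁ β₂ β₃ α ρ n w₀ wn1 x W
        - updateMap F β₁ β₂ β₃ α ρ n w₀ wn1 x V) j
        = ρ * (c * β₁ + α) * d₁ + (1 + ρ * (c * β₂ - 2 * α)) * d₂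
          + ρ * (c * β₃ + α) * d₃ := by
      simp only [Pi.sub_apply, updateMap, laxFriedrichsOp, hd₁def, hd₂def, hd₃def]
      linear_combination ρ * hceq
    have hA₁ : 0 ≤ ρ * (c * β₁ + α) := by
      have := mul_le_mul_of_nonneg_right hc1 hβ₁
      nlinarith
    have hA₃ : 0 ≤ ρ * (c * β₃ + α) := by
      have := mul_le_mul_of_nonneg_right hc1 hβ₃
      nlinarith
    have hA₂ : 0 ≤ 1 + ρ * (c * β₂ - 2 * α) := by
      have h1 := mul_le_mul_of_nonneg_right hc1 hβ₂
      have h2 := mul_le_mul_of_nonneg_left h1 hρ.le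
      nlinarith
    rw [Real.norm_eq_abs, hcomp]
    calc |ρ * (c * β₁ + α) * d₁ + (1 + ρ * (c * β₂ - 2 * α)) * d₂ + ρ * (c * β₃ + α) * d₃|
        ≤ |ρ * (c * β₁ + α) * d₁| + |(1 + ρ * (c * β₂ - 2 * α)) * d₂|
          + |ρ * (c * β₃ + α) * d₃| := abs_add_three _ _ _
      _ ≤ ρ * (c * β₁ + α) * M + (1 + ρ * (c * β₂ - 2 * α)) * M + ρ * (c * β₃ + α) * M := by
          have e₁ : |ρ * (c * β₁ + α) * d₁| ≤ ρ * (c * β₁ + α) * M := by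
            rw [abs_mul, abs_of_nonneg hA₁]
            exact mul_le_mul_of_nonneg_left hd₁ hA₁
          have e₂ : |(1 + ρ * (c * β₂ - 2 * α)) * d₂| ≤ (1 + ρ * (c * β₂ - 2 * α)) * M := by
            rw [abs_mul, abs_of_nonneg hA₂]
            exact mul_le_mul_of_nonneg_left hd₂ hA₂
          have e₃ : |ρ * (c * β₃ + α) * d₃| ≤ ρ * (c * β₃ + α) * M := by
            rw [abs_mul, abs_of_nonneg hA₃]
            exact mul_le_mul_of_nonneg_left hd₃ hA₃
          linarith
      _ ≤ (1 + ρ * ((β₁ + β₃) * γ - 1 / γ)) * M := by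
          have hsumco : ρ * (c * β₁ + α) + (1 + ρ * (c * β₂ - 2 * α)) + ρ * (c * β₃ + α)
              = 1 + ρ * c := by linear_combination ρ * c * hsum
          have hfac : 1 + ρ * c ≤ 1 + ρ * ((β₁ + β₃) * γ - 1 / γ) := by
            have h1 := mul_le_mul_of_nonneg_left hc2 hρ.le
            nlinarith [mul_nonneg (mul_nonneg hρ.le (add_nonneg hβ₁ hβ₃)) hγ.le]
          nlinarith [mul_le_mul_of_nonneg_right hfac hM0]
  refine ⟨main, fun hlt hρbig W V => ?_⟩
  have hδ : 0 < 1 / γ - (β₁ + β₃) * γ := by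
    have h := mul_lt_mul_of_pos_right hlt hγ
    have h2 : 1 / γ ^ 2 * γ = 1 / γ := by
      field_simp
    rw [h2] at h
    linarith
  have hfac : 1 + ρ * ((β₁ + β₃) * γ - 1 / γ) ≤ 1 / 2 := by
    have h1 := mul_le_mul_of_nonneg_right hρbig hδ.le
    rw [mul_assoc, inv_mul_cancel₀ hδ.ne', mul_one] at h1
    nlinarith
  calc ‖updateMap F β₁ β₂ β₃ α ρ n w₀ wn1 x W - updateMap F β₁ β₂ β₃ α ρ n w₀ wn1 x V‖
      ≤ (1 + ρ * ((β₁ + β₃) * γ - 1 / γ)) * ‖W - V‖ := main W V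
    _ ≤ (1 / 2) * ‖W - V‖ := mul_le_mul_of_nonneg_right hfac (norm_nonneg _)
end

section
/- Theorem 4.2 (admissibility and unique solvability of the Lax–Friedrichs-like scheme): Let γ > 0 and F : ℝ × ℝ → ℝ with p ↦ F(p,x) differentiable and −γ ≤ ∂F/∂p(p,x) ≤ −1/γ for all (p,x). Let β₁, β₂, β₃ ≥ 0 with β₁ + β₂ + β₃ = 1 and α > max{β₁,β₃}·γ. Then for every n ≥ 1, every choice of points x₁,…,x_n ∈ ℝ, and every choice of end data w₀, w_{n+1} ∈ ℝ, there exists a unique vector W = (W₁,…,W_n) ∈ ℝⁿ such that, setting W₀ := w₀ and W_{n+1} := w_{n+1}, F̂_β(W_{j−1}, W_j, W_{j+1}, x_j) = 0 for every j = 1,…,n. (Interpreting W_j as the centered second difference δ²U_j of a grid function U, this says the finite difference scheme F̂_β(δ²U_{j−1}, δ²U_j, δ²U_{j+1}, x_j) = 0 at interior grid points, with prescribed boundary-adjacent second-difference data, is admissible and uniquely solvable.) -/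
private lemma lf_bound_aux (γ α β₁ β₂ β₃ ρ c' d₁ d₂ d₃ D : ℝ)
    (hγ : 0 < γ) (hβ₁ : 0 ≤ β₁) (hβ₂ : 0 ≤ β₂) (hβ₃ : 0 ≤ β₃)
    (hsum : β₁ + β₂ + β₃ = 1)
    (hβ₁γ : β₁ * γ < α) (hβ₃γ : β₃ * γ < α)
    (hρpos : 0 < ρ) (hρeq : ρ * (2 * α + γ) = 1)
    (hclo : -γ ≤ c') (hchi : c' ≤ -(1 / γ))
    (hb₁ : |d₁| ≤ D) (hb₂ : |d₂| ≤ D) (hb₃ : |d₃| ≤ D) (hD : 0 ≤ D) :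
    |(ρ * (c' * β₁ + α)) * d₁ + (1 + ρ * (c' * β₂ - 2 * α)) * d₂
      + (ρ * (c' * β₃ + α)) * d₃| ≤ (1 - ρ / γ) * D := by
  have hm₁ : -γ * β₁ ≤ c' * β₁ := mul_le_mul_of_nonneg_right hclo hβ₁
  have hm₂ : -γ * β₂ ≤ c' * β₂ := mul_le_mul_of_nonneg_right hclo hβ₂
  have hm₃ : -γ * β₃ ≤ c' * β₃ := mul_le_mul_of_nonneg_right hclo hβ₃
  have ha₁ : 0 ≤ ρ * (c' * β₁ + α) := mul_nonneg hρpos.le (by nlinarith)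
  have ha₃ : 0 ≤ ρ * (c' * β₃ + α) := mul_nonneg hρpos.le (by nlinarith)
  have ha₂ : 0 ≤ 1 + ρ * (c' * β₂ - 2 * α) := by
    have hβ₂1 : β₂ ≤ 1 := by linarith
    have hgb : γ * β₂ ≤ γ := by nlinarith
    have hlow : -(2 * α + γ) ≤ c' * β₂ - 2 * α := by nlinarith
    have := mul_le_mul_of_nonneg_left hlow hρpos.le
    nlinarith
  calc |(ρ * (c' * β₁ + α)) * d₁ + (1 + ρ * (c' * β₂ - 2 * α)) * d₂
        + (ρ * (c' * β₃ + α)) * d₃|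
      ≤ |(ρ * (c' * β₁ + α)) * d₁| + |(1 + ρ * (c' * β₂ - 2 * α)) * d₂|
        + |(ρ * (c' * β₃ + α)) * d₃| := abs_add_three _ _ _
    _ = (ρ * (c' * β₁ + α)) * |d₁| + (1 + ρ * (c' * β₂ - 2 * α)) * |d₂|
        + (ρ * (c' * β₃ + α)) * |d₃| := by
          rw [abs_mul (ρ * (c' * β₁ + α)) d₁, abs_mul (1 + ρ * (c' * β₂ - 2 * α)) d₂,
            abs_mul (ρ * (c' * β₃ + α)) d₃, abs_of_nonneg ha₁, abs_of_nonneg ha₂,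
            abs_of_nonneg ha₃]
    _ ≤ (ρ * (c' * β₁ + α)) * D + (1 + ρ * (c' * β₂ - 2 * α)) * D
        + (ρ * (c' * β₃ + α)) * D := by gcongr
    _ = (1 + ρ * c' * (β₁ + β₂ + β₃)) * D := by ring
    _ ≤ (1 - ρ / γ) * D := by
          apply mul_le_mul_of_nonneg_right _ hD
          rw [hsum]
          have h1 : ρ * c' ≤ ρ * (-(1 / γ)) := mul_le_mul_of_nonneg_left hchi hρpos.le
          have h2 : ρ * (-(1 / γ)) = -(ρ / γ) := by ring
          linarith


/-- Theorem 4.2 (admissibility and unique solvability of the Lax–Friedrichs-like scheme):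
under the structure condition `−γ ≤ ∂F/∂p ≤ −1/γ`, with `β₁,β₂,β₃ ≥ 0`, `β₁+β₂+β₃ = 1`
and `α > max{β₁,β₃}·γ`, for every `n ≥ 1`, points `x₁,…,x_n`, and end data `w₀, w_{n+1}`,
there exists a unique `W ∈ ℝⁿ` such that, setting `W₀ := w₀` and `W_{n+1} := w_{n+1}`,
`F̂_β(W_{j−1}, W_j, W_{j+1}, x_j) = 0` for every `j = 1,…,n`.  (Index `j : Fin n`
corresponds to grid index `j+1`, so the neighbors have integer indices `j` and `j+2`.) -/
theorem laxFriedrichs_scheme_uniquely_solvable (γ : ℝ) (hγ : 0 < γ) (F : ℝ → ℝ → ℝ)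
    (hFdiff : ∀ x : ℝ, Differentiable ℝ fun p => F p x)
    (hFderiv : ∀ p x : ℝ, deriv (fun q => F q x) p ∈ Set.Icc (-γ) (-(1 / γ)))
    (β₁ β₂ β₃ : ℝ) (hβ₁ : 0 ≤ β₁) (hβ₂ : 0 ≤ β₂) (hβ₃ : 0 ≤ β₃)
    (hsum : β₁ + β₂ + β₃ = 1)
    (α : ℝ) (hα : max β₁ β₃ * γ < α)
    (n : ℕ) (hn : 1 ≤ n) (x : Fin n → ℝ) (w₀ wn1 : ℝ) :
    ∃! W : Fin n → ℝ, ∀ j : Fin n,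
      laxFriedrichsOp F β₁ β₂ β₃ α
        (gridExt n w₀ wn1 W ((j : ℕ) : ℤ)) (W j) (gridExt n w₀ wn1 W (((j : ℕ) : ℤ) + 2))
        (x j) = 0 := by
  -- basic constants
  have hβ₁γ : β₁ * γ < α := lt_of_le_of_lt (by nlinarith [le_max_left β₁ β₃]) hα
  have hβ₃γ : β₃ * γ < α := lt_of_le_of_lt (by nlinarith [le_max_right β₁ β₃]) hα
  have hαpos : 0 < α := lt_of_le_of_lt (by positivity) hα
  have hγ1 : 1 ≤ γ := by
    have h := (hFderiv 0 0).1.trans (hFderiv 0 0).2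
    by_contra hcon
    push_neg at hcon
    have h1 : 1 / γ ≤ γ := by linarith
    rw [div_le_iff₀ hγ] at h1
    nlinarith
  set ρ : ℝ := 1 / (2 * α + γ) with hρdef
  have hρpos : 0 < ρ := by positivity
  have hρeq : ρ * (2 * α + γ) = 1 := by
    rw [hρdef]
    field_simp
  have hk0 : 0 ≤ 1 - ρ / γ := by
    rw [sub_nonneg, div_le_one hγ, hρdef, div_le_iff₀ (by positivity)]
    nlinarith
  have hk1 : 1 - ρ / γ < 1 := by
    have : 0 < ρ / γ := by positivity
    linarith
  -- the iteration map
  set f : (Fin n → ℝ) → (Fin n → ℝ) := fun W j => W j + ρ *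
      laxFriedrichsOp F β₁ β₂ β₃ α
        (gridExt n w₀ wn1 W ((j : ℕ) : ℤ)) (W j) (gridExt n w₀ wn1 W (((j : ℕ) : ℤ) + 2))
        (x j) with hf
  -- every coordinate of gridExt differs by at most dist W V
  have hgrid : ∀ (W V : Fin n → ℝ) (i : ℤ),
      |gridExt n w₀ wn1 W i - gridExt n w₀ wn1 V i| ≤ dist W V := by
    intro W V i
    unfold gridExt
    split_ifs with h h2
    · have := dist_le_pi_dist W V ⟨(i - 1).toNat, by omega⟩
      rwa [Real.dist_eq] at this
    · simpa using dist_nonneg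
    · simpa using dist_nonneg
  -- mean value theorem
  have hmvt : ∀ (u v y : ℝ), ∃ c, F u y - F v y = deriv (fun q => F q y) c * (u - v) := by
    intro u v y
    rcases lt_trichotomy u v with h | h | h
    · obtain ⟨c, _, hc⟩ := exists_deriv_eq_slope (fun q => F q y) h
        ((hFdiff y).continuous.continuousOn) ((hFdiff y).differentiableOn)
      refine ⟨c, ?_⟩
      have hne : v - u ≠ 0 := sub_ne_zero_of_ne h.ne'
      rw [hc, div_mul_eq_mul_div, eq_div_iff hne]
      ring
    · exact ⟨0, by rw [h]; ring⟩
    · obtain ⟨c, _, hc⟩ := exists_deriv_eq_slope (fun q => F q y) h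
        ((hFdiff y).continuous.continuousOn) ((hFdiff y).differentiableOn)
      refine ⟨c, ?_⟩
      have hne : u - v ≠ 0 := sub_ne_zero_of_ne h.ne'
      rw [hc, div_mul_eq_mul_div, eq_div_iff hne]
  -- the key coordinatewise estimate
  have key : ∀ W V : Fin n → ℝ, ∀ j : Fin n,
      |f W j - f V j| ≤ (1 - ρ / γ) * dist W V := by
    intro W V j
    obtain ⟨c, hc⟩ := hmvt
      (β₁ * gridExt n w₀ wn1 W ((j : ℕ) : ℤ) + β₂ * W j +
        β₃ * gridExt n w₀ wn1 W (((j : ℕ) : ℤ) + 2))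
      (β₁ * gridExt n w₀ wn1 V ((j : ℕ) : ℤ) + β₂ * V j +
        β₃ * gridExt n w₀ wn1 V (((j : ℕ) : ℤ) + 2)) (x j)
    have hcmem := hFderiv c (x j)
    have expand : f W j - f V j =
        (ρ * (deriv (fun q => F q (x j)) c * β₁ + α)) *
            (gridExt n w₀ wn1 W ((j : ℕ) : ℤ) - gridExt n w₀ wn1 V ((j : ℕ) : ℤ))
          + (1 + ρ * (deriv (fun q => F q (x j)) c * β₂ - 2 * α)) * (W j - V j)
          + (ρ * (deriv (fun q => F q (x j)) c * β₃ + α)) *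
            (gridExt n w₀ wn1 W (((j : ℕ) : ℤ) + 2)
              - gridExt n w₀ wn1 V (((j : ℕ) : ℤ) + 2)) := by
      simp only [hf, laxFriedrichsOp]
      linear_combination ρ * hc
    rw [expand]
    refine lf_bound_aux γ α β₁ β₂ β₃ ρ _ _ _ _ _ hγ hβ₁ hβ₂ hβ₃ hsum hβ₁γ hβ₃γ
      hρpos hρeq hcmem.1 hcmem.2 (hgrid W V _) ?_ (hgrid W V _) dist_nonneg
    have := dist_le_pi_dist W V j
    rwa [Real.dist_eq] at this
  -- f is a contraction
  set k : NNReal := ⟨1 - ρ / γ, hk0⟩ with hk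
  have hcontr : ContractingWith k f := by
    constructor
    · rw [← NNReal.coe_lt_one]
      exact hk1
    · apply LipschitzWith.of_dist_le_mul
      intro W V
      show dist (f W) (f V) ≤ (1 - ρ / γ) * dist W V
      rw [dist_pi_le_iff (mul_nonneg hk0 dist_nonneg)]
      intro j
      rw [Real.dist_eq]
      exact key W V j
  -- fixed points of f are exactly solutions of the scheme
  have hequiv : ∀ W : Fin n → ℝ,
      (∀ j : Fin n, laxFriedrichsOp F β₁ β₂ β₃ α
        (gridExt n w₀ wn1 W ((j : ℕ) : ℤ)) (W j) (gridExt n w₀ wn1 W (((j : ℕ) : ℤ) + 2))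
        (x j) = 0) ↔ Function.IsFixedPt f W := by
    intro W
    constructor
    · intro h
      funext j
      simp [hf, h j]
    · intro h j
      have := congrFun h j
      simp only [hf] at this
      have h2 : ρ * laxFriedrichsOp F β₁ β₂ β₃ α
        (gridExt n w₀ wn1 W ((j : ℕ) : ℤ)) (W j) (gridExt n w₀ wn1 W (((j : ℕ) : ℤ) + 2))
        (x j) = 0 := by linarith
      rcases mul_eq_zero.mp h2 with h3 | h3
      · exact absurd h3 (ne_of_gt hρpos)
      · exact h3
  refine ⟨ContractingWith.fixedPoint f hcontr, (hequiv _).mpr hcontr.fixedPoint_isFixedPt,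
    fun V hV => hcontr.fixedPoint_unique ((hequiv V).mp hV)⟩
end
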